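/- arXiv:2505.11233 — 3 statements merged into one kernel-verified Lean document; each statement's English description precedes it below -/
import Mathlib

section
/- Let H ≥ 2 be an integer and I = {0,1,2} ∪ {2H}. Then for every positive integer h < H, |hI| = (h+1)². -/
open Finset Pointwise

/-- `hsum h A` is the `h`-fold sumset of `A` (pointwise sum of `h` copies). -/
def hsum (h : ℕ) (A : Finset ℤ) : Finset ℤ := ∑ _i ∈ Finset.range h, A

/-- `transl t A` is the translate `t + A`. -/
def transl (t : ℤ) (A : Finset ℤ) : Finset ℤ := A.image (t + ·)

/-!
A sum of `h` elements of `{0, 1, 2} ∪ {M}` using `j` copies of `M` ranges over the whole block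
`[j M, j M + 2 (h - j)]`, so the `h`-fold sumset is the union of these `h + 1` blocks. When
`M > 2 h` the blocks are pairwise disjoint, and their sizes are the odd numbers `1, 3, …, 2 h + 1`,
which add up to `(h + 1)²`.
-/

/-- The sums of `i` elements of `{0, 1, 2}` and `j` copies of `M` fill the block `[j M, j M + 2 i]`. -/
noncomputable def block (M : ℤ) (p : ℕ × ℕ) : Finset ℤ := Icc (p.2 * M) (p.2 * M + 2 * p.1)

noncomputable def ladder (M : ℤ) (h : ℕ) : Finset ℤ := (antidiagonal h).biUnion (block M)

lemma mem_ladder {M x : ℤ} {h : ℕ} :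
    x ∈ ladder M h ↔ ∃ i j : ℕ, i + j = h ∧ j * M ≤ x ∧ x ≤ j * M + 2 * i := by
  simp [ladder, block]

lemma hsum_zero (A : Finset ℤ) : hsum 0 A = 0 := sum_range_zero _

lemma hsum_succ (h : ℕ) (A : Finset ℤ) : hsum (h + 1) A = hsum h A + A := sum_range_succ _ _

lemma ladder_zero (M : ℤ) : ladder M 0 = 0 := by
  ext x
  simp only [mem_ladder, Nat.add_eq_zero_iff, mem_zero]
  constructor
  · rintro ⟨i, j, ⟨rfl, rfl⟩, h₁, h₂⟩
    simp_all only [Nat.cast_zero, zero_mul, mul_zero, add_zero]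
    omega
  · rintro rfl
    exact ⟨0, 0, ⟨rfl, rfl⟩, by simp⟩

lemma ladder_add (M : ℤ) (h : ℕ) : ladder M h + ({0, 1, 2} ∪ {M}) = ladder M (h + 1) := by
  ext x
  simp only [mem_add, mem_ladder, mem_union, mem_insert, mem_singleton]
  constructor
  · rintro ⟨y, ⟨i, j, rfl, h₁, h₂⟩, b, hb, rfl⟩
    rcases hb with hb | rfl
    · exact ⟨i + 1, j, by ring, by omega, by push_cast; omega⟩
    · exact ⟨i, j + 1, by ring, by push_cast; linarith, by push_cast; linarith⟩
  · rintro ⟨i, j, hij, h₁, h₂⟩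
    rcases i with _ | i
    · refine ⟨h * M, ⟨0, h, by simp, le_rfl, by simp⟩, M, .inr rfl, ?_⟩
      obtain rfl : j = h + 1 := by omega
      push_cast at h₁ h₂ ⊢
      linarith
    · set b := min 2 (x - j * M)
      refine ⟨x - b, ⟨i, j, by omega, ?_, ?_⟩, b, .inl ?_, by ring⟩
      · omega
      · push_cast at h₂; omega
      · omega

lemma hsum_eq_ladder (M : ℤ) (h : ℕ) : hsum h ({0, 1, 2} ∪ {M}) = ladder M h := by
  induction h with
  | zero => rw [hsum_zero, ladder_zero]
  | succ h ih => rw [hsum_succ, ih, ladder_add]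

lemma card_block (M : ℤ) (p : ℕ × ℕ) : (block M p).card = 2 * p.1 + 1 := by
  rw [block, Int.card_Icc]
  omega

lemma disjoint_block {M : ℤ} {h : ℕ} (hM : 2 * h < M) {p q : ℕ × ℕ} (hp : p.1 + p.2 = h)
    (hpq : p.2 < q.2) : Disjoint (block M p) (block M q) := by
  have hstep : (p.2 : ℤ) * M + M ≤ q.2 * M := by
    have : (p.2 : ℤ) + 1 ≤ q.2 := by exact_mod_cast hpq
    nlinarith
  rw [disjoint_left]
  intro x hx hx'
  simp only [block, mem_Icc] at hx hx'
  omega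

lemma sum_range_two_mul_add_one (n : ℕ) : ∑ i ∈ range n, (2 * i + 1) = n ^ 2 := by
  induction n with
  | zero => rfl
  | succ n ih => rw [sum_range_succ, ih]; ring

lemma card_ladder {M : ℤ} {h : ℕ} (hM : 2 * h < M) : (ladder M h).card = (h + 1) ^ 2 := by
  rw [ladder, card_biUnion]
  · simp only [card_block]
    rw [Nat.sum_antidiagonal_eq_sum_range_succ_mk, sum_range_two_mul_add_one]
  · intro p hp q hq hpq
    rw [mem_coe, HasAntidiagonal.mem_antidiagonal] at hp hq
    have : p.2 ≠ q.2 := fun h2 ↦ hpq (Prod.ext (by omega) h2)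
    rcases this.lt_or_gt with hlt | hgt
    · exact disjoint_block hM hp hlt
    · exact (disjoint_block hM hq hgt).symm

theorem stmt_5_general (H : ℕ) (h : ℕ) (hhH : h < H) :
    (hsum h ({0, 1, 2} ∪ {2 * (H : ℤ)})).card = (h + 1) ^ 2 := by
  rw [hsum_eq_ladder, card_ladder]
  omega

theorem stmt_5 (H : ℕ) (hH : 2 ≤ H) (h : ℕ) (hh : 1 ≤ h) (hhH : h < H) :
    (hsum h ({0, 1, 2} ∪ {2 * (H : ℤ)})).card = (h + 1) ^ 2 :=
  stmt_5_general H h hhH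
end

section
/- Let H ≥ 2 be an integer and J = {0,1} ∪ {2H-1, 2H}. Then for every positive integer h < 2H - 1, |hJ| = (h+1)². -/
open Finset Pointwise

lemma hsum_add (h : ℕ) (A B : Finset ℤ) : hsum h (A + B) = hsum h A + hsum h B :=
  sum_add_distrib

lemma hsum_zero_pair (h : ℕ) (c : ℤ) : hsum h {0, c} = (Icc 0 (h : ℤ)).image (· * c) := by
  induction h with
  | zero => ext z; simp [hsum]
  | succ n ih =>
    rw [hsum_succ, ih]
    ext z
    simp only [mem_add, mem_image, mem_Icc, mem_insert, mem_singleton]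
    push_cast
    constructor
    · rintro ⟨k, ⟨hk, -⟩, b, rfl | rfl, rfl⟩
      · exact ⟨k, by omega, by ring⟩
      · exact ⟨k + 1, by omega, by ring⟩
    · rintro ⟨k, hk, rfl⟩
      by_cases hkn : k ≤ n
      · exact ⟨k, ⟨by omega, rfl⟩, 0, Or.inl rfl, by ring⟩
      · exact ⟨k - 1, ⟨by omega, rfl⟩, c, Or.inr rfl, by ring⟩

lemma hsum_zero_one (h : ℕ) : hsum h {0, 1} = Icc 0 (h : ℤ) := by
  simp [hsum_zero_pair]

lemma pair_union_pair_eq_add (c : ℤ) :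
    ({0, 1} ∪ {c, c + 1} : Finset ℤ) = {0, 1} + {0, c} := by
  ext z
  simp only [mem_union, mem_add, mem_insert, mem_singleton]
  constructor
  · rintro ((rfl | rfl) | rfl | rfl)
    · exact ⟨0, Or.inl rfl, 0, Or.inl rfl, rfl⟩
    · exact ⟨1, Or.inr rfl, 0, Or.inl rfl, rfl⟩
    · exact ⟨0, Or.inl rfl, _, Or.inr rfl, zero_add _⟩
    · exact ⟨1, Or.inr rfl, _, Or.inr rfl, add_comm _ _⟩
  · rintro ⟨a, rfl | rfl, b, rfl | rfl, rfl⟩ <;> simp [add_comm]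

lemma card_add_image_mul_of_subset_Ico {c : ℤ} (hc : 0 < c) {s : Finset ℤ}
    (hs : s ⊆ Ico 0 c) (t : Finset ℤ) : #(s + t.image (· * c)) = #s * #t := by
  rw [card_add_iff.2, card_image_of_injective _ (mul_left_injective₀ hc.ne')]
  rintro ⟨a, _⟩ hp ⟨a', _⟩ hq heq
  simp only [coe_image, Set.mem_prod, mem_coe, Set.mem_image] at hp hq heq
  obtain ⟨ha, k, -, rfl⟩ := hp
  obtain ⟨ha', k', -, rfl⟩ := hq
  have ha := mem_Ico.1 (hs ha)
  have ha' := mem_Ico.1 (hs ha')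
  have hrem : a = a' := by
    rw [← Int.emod_eq_of_lt ha.1 ha.2, ← Int.emod_eq_of_lt ha'.1 ha'.2,
      ← Int.add_mul_emod_self_right a k, ← Int.add_mul_emod_self_right a' k', heq]
  subst hrem
  simp only [Prod.mk.injEq, true_and]
  omega

theorem stmt_8_general (H : ℕ) (h : ℕ) (hhH : h < 2 * H - 1) :
    (hsum h ({0, 1} ∪ {2 * (H : ℤ) - 1, 2 * (H : ℤ)})).card = (h + 1) ^ 2 := by
  have hc : (h : ℤ) < 2 * H - 1 := by omega
  have hJ := pair_union_pair_eq_add (2 * (H : ℤ) - 1)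
  rw [sub_add_cancel] at hJ
  rw [hJ, hsum_add, hsum_zero_one, hsum_zero_pair,
    card_add_image_mul_of_subset_Ico (by omega) (Icc_subset_Ico_right (by omega)), Int.card_Icc]
  simp only [sub_zero, Int.toNat_natCast_add_one]
  ring

theorem stmt_8 (H : ℕ) (hH : 2 ≤ H) (h : ℕ) (hh : 1 ≤ h) (hhH : h < 2 * H - 1) :
    (hsum h ({0, 1} ∪ {2 * (H : ℤ) - 1, 2 * (H : ℤ)})).card = (h + 1) ^ 2 :=
  stmt_8_general H h hhH
end

section
/- Let A, B be finite sets of integers with min(A)=min(B)=0, |A|=|B|, gcd(A)=gcd(B)=1, and suppose h₁ < ... < h_m are positive integers with |h_iA| > |h_iB| for odd i and |h_iA| < |h_iB| for even i. Let N = max(max A, max B). Then for any integers α, β > h_m N, r ≥ 2, and any positive integer h < min(α,β)/N, the sets A' = ⋃_{j=0}^{r-1}(jα + A) and B' = ⋃_{j=0}^{r-1}(jβ + B) satisfy |hA'| = (h(r-1)+1)|hA| and |hB'| = (h(r-1)+1)|hB|; in particular |h_iA'| > |h_iB'| for odd i ≤ m and |h_iA'| < |h_iB'| for even i ≤ m.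 -/
/-!
The set `A'` is the sumset `P + A` of the progression `P = {0, α, …, (r-1)α}` with `A`, so
`hA' = hP + hA` with `hP = {0, α, …, h(r-1)α}`. When `hN < α`, the set `hA ⊆ [0, hN]` fits
inside one gap of `hP`, so the translates `sα + hA` are pairwise disjoint and
`|hA'| = (h(r-1)+1)|hA|`. Both races are thus scaled by the same positive factor.
-/

open Finset Pointwise

theorem hsum_eq_nsmul (h : ℕ) (A : Finset ℤ) : hsum h A = h • A := by
  simp [hsum]

theorem biUnion_transl_eq_image_add {ι : Type*} (s : Finset ι) (f : ι → ℤ) (A : Finset ℤ) :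
    s.biUnion (fun j => transl (f j) A) = s.image f + A := by
  ext x
  simp only [mem_biUnion, transl, mem_image, mem_add, exists_exists_and_eq_and]

namespace Finset.Nat

theorem Iic_add_Iic (a b : ℕ) : Iic a + Iic b = Iic (a + b) := by
  refine Subset.antisymm (Iic_add_Iic_subset a b) fun x hx => ?_
  rw [mem_Iic] at hx
  exact mem_add.2 ⟨min x a, by simp, x - min x a, by simp; omega, by omega⟩

theorem nsmul_Iic (h n : ℕ) : h • Iic n = Iic (h * n) := by
  induction h with
  | zero => ext; simp [← singleton_zero]
  | succ h ih => rw [succ_nsmul, ih, Iic_add_Iic, Nat.succ_mul]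

end Finset.Nat

theorem nsmul_subset_Icc {A : Finset ℤ} {M : ℤ} (hA : A ⊆ Icc 0 M) (h : ℕ) :
    h • A ⊆ Icc 0 (h * M) := by
  induction h with
  | zero => simp [← singleton_zero]
  | succ h ih =>
    rw [succ_nsmul]
    refine (add_subset_add ih hA).trans ((Icc_add_Icc_subset _ _ _ _).trans ?_)
    simp [add_mul]

theorem card_image_mul_range_add {α : ℤ} (hα : 0 < α) (n : ℕ) {X : Finset ℤ}
    (hX : X ⊆ Ico 0 α) :
    ((range n).image (fun j : ℕ => (j : ℤ) * α) + X).card = n * X.card := by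
  have hinj : Function.Injective (fun j : ℕ => (j : ℤ) * α) := fun s t hst =>
    by exact_mod_cast mul_right_cancel₀ hα.ne' hst
  rw [card_add_iff.2, card_image_of_injective _ hinj, card_range]
  rintro ⟨_, x⟩ hsx ⟨_, y⟩ hty hxy
  simp only [Set.mem_prod, mem_coe, mem_image, mem_range] at hsx hty hxy
  obtain ⟨⟨s, -, rfl⟩, hx⟩ := hsx
  obtain ⟨⟨t, -, rfl⟩, hy⟩ := hty
  have hx := mem_Ico.1 (hX hx)
  have hy := mem_Ico.1 (hX hy)
  have hx_eq_y : x = y := by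
    have : y - x = 0 := Int.eq_zero_of_abs_lt_dvd (m := α) ⟨s - t, by linarith⟩
      (abs_sub_lt_iff.2 ⟨by linarith, by linarith⟩)
    omega
  subst hx_eq_y
  simp [hinj.eq_iff.1 (add_right_cancel hxy)]

theorem nsmul_image_mul_range_succ (α : ℤ) (h k : ℕ) :
    h • (range (k + 1)).image (fun j : ℕ => (j : ℤ) * α) =
      (range (h * k + 1)).image (fun j : ℕ => (j : ℤ) * α) := by
  have hφ : (fun j : ℕ => (j : ℤ) * α) = multiplesHom ℤ α := by
    ext j; simp
  rw [hφ, ← image_nsmul, Nat.range_succ_eq_Iic, Finset.Nat.nsmul_Iic, Nat.range_succ_eq_Iic]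

theorem card_hsum_biUnion_transl {A : Finset ℤ} {M α : ℤ} {h r : ℕ} (hr : 1 ≤ r)
    (hA : A ⊆ Icc 0 M) (hM : 0 ≤ M) (hα : (h : ℤ) * M < α) :
    (hsum h ((range r).biUnion fun j => transl ((j : ℤ) * α) A)).card =
      (h * (r - 1) + 1) * (hsum h A).card := by
  have hα0 : 0 < α := lt_of_le_of_lt (by positivity) hα
  obtain ⟨k, rfl⟩ := Nat.exists_eq_add_of_le' hr
  rw [hsum_eq_nsmul, hsum_eq_nsmul, biUnion_transl_eq_image_add, nsmul_add,
    nsmul_image_mul_range_succ, Nat.add_sub_cancel]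
  refine card_image_mul_range_add hα0 _ ((nsmul_subset_Icc hA h).trans fun x hx => ?_)
  simp only [mem_Icc, mem_Ico] at hx ⊢
  omega

theorem stmt_11_general (A B : Finset ℤ) (hAne : A.Nonempty) (hBne : B.Nonempty)
    (hminA : A.min' hAne = 0) (hminB : B.min' hBne = 0)
    (m : ℕ) (hs : ℕ → ℕ) (hmono : StrictMonoOn hs (Finset.Icc 1 m))
    (hrace : ∀ i, 1 ≤ i → i ≤ m →
      (Odd i → (hsum (hs i) B).card < (hsum (hs i) A).card) ∧
      (Even i → (hsum (hs i) A).card < (hsum (hs i) B).card))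
    (N : ℤ) (hN : N = max (A.max' hAne) (B.max' hBne))
    (α β : ℤ) (hα : (hs m : ℤ) * N < α) (hβ : (hs m : ℤ) * N < β)
    (r : ℕ) (hr : 2 ≤ r) :
    (∀ h : ℕ, 0 < h → (h : ℤ) * N < min α β →
        (hsum h ((Finset.range r).biUnion fun j => transl ((j : ℤ) * α) A)).card =
            (h * (r - 1) + 1) * (hsum h A).card ∧
        (hsum h ((Finset.range r).biUnion fun j => transl ((j : ℤ) * β) B)).card =
            (h * (r - 1) + 1) * (hsum h B).card) ∧
    (∀ i, 1 ≤ i → i ≤ m →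
      (Odd i →
        (hsum (hs i) ((Finset.range r).biUnion fun j => transl ((j : ℤ) * β) B)).card <
        (hsum (hs i) ((Finset.range r).biUnion fun j => transl ((j : ℤ) * α) A)).card) ∧
      (Even i →
        (hsum (hs i) ((Finset.range r).biUnion fun j => transl ((j : ℤ) * α) A)).card <
        (hsum (hs i) ((Finset.range r).biUnion fun j => transl ((j : ℤ) * β) B)).card)) := by
  have hA : A ⊆ Icc 0 N := fun a ha => mem_Icc.2
    ⟨hminA ▸ A.min'_le a ha, hN ▸ (A.le_max' a ha).trans (le_max_left _ _)⟩
  have hB : B ⊆ Icc 0 N := fun b hb => mem_Icc.2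
    ⟨hminB ▸ B.min'_le b hb, hN ▸ (B.le_max' b hb).trans (le_max_right _ _)⟩
  have hN0 : 0 ≤ N := by
    obtain ⟨h0, h0N⟩ := mem_Icc.1 (hA (A.min'_mem hAne))
    exact h0.trans h0N
  have hr1 : 1 ≤ r := by omega
  have hcard (h : ℕ) (hh : (h : ℤ) * N < min α β) := lt_min_iff.1 hh |>.imp
    (card_hsum_biUnion_transl hr1 hA hN0) (card_hsum_biUnion_transl hr1 hB hN0)
  refine ⟨fun h _ hh => hcard h hh, fun i hi him => ?_⟩
  have hle : hs i ≤ hs m :=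
    hmono.monotoneOn (mem_Icc.2 ⟨hi, him⟩) (mem_Icc.2 ⟨hi.trans him, le_rfl⟩) him
  have hi_lt : (hs i : ℤ) * N < min α β :=
    lt_min_iff.2 ⟨lt_of_le_of_lt (by gcongr) hα, lt_of_le_of_lt (by gcongr) hβ⟩
  obtain ⟨hcardA, hcardB⟩ := hcard _ hi_lt
  rw [hcardA, hcardB]
  exact (hrace i hi him).imp (fun h ho => Nat.mul_lt_mul_of_pos_left (h ho) (Nat.succ_pos _))
    (fun h he => Nat.mul_lt_mul_of_pos_left (h he) (Nat.succ_pos _))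

theorem stmt_11 (A B : Finset ℤ) (hAne : A.Nonempty) (hBne : B.Nonempty)
    (hminA : A.min' hAne = 0) (hminB : B.min' hBne = 0)
    (hcard : A.card = B.card) (hgcdA : A.gcd id = 1) (hgcdB : B.gcd id = 1)
    (m : ℕ) (hs : ℕ → ℕ) (hmono : StrictMonoOn hs (Finset.Icc 1 m))
    (hpos : ∀ i, 1 ≤ i → i ≤ m → 0 < hs i)
    (hrace : ∀ i, 1 ≤ i → i ≤ m →
      (Odd i → (hsum (hs i) B).card < (hsum (hs i) A).card) ∧
      (Even i → (hsum (hs i) A).card < (hsum (hs i) B).card))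
    (N : ℤ) (hN : N = max (A.max' hAne) (B.max' hBne))
    (α β : ℤ) (hα : (hs m : ℤ) * N < α) (hβ : (hs m : ℤ) * N < β)
    (r : ℕ) (hr : 2 ≤ r) :
    (∀ h : ℕ, 0 < h → (h : ℤ) * N < min α β →
        (hsum h ((Finset.range r).biUnion fun j => transl ((j : ℤ) * α) A)).card =
            (h * (r - 1) + 1) * (hsum h A).card ∧
        (hsum h ((Finset.range r).biUnion fun j => transl ((j : ℤ) * β) B)).card =
            (h * (r - 1) + 1) * (hsum h B).card) ∧
    (∀ i, 1 ≤ i → i ≤ m →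
      (Odd i →
        (hsum (hs i) ((Finset.range r).biUnion fun j => transl ((j : ℤ) * β) B)).card <
        (hsum (hs i) ((Finset.range r).biUnion fun j => transl ((j : ℤ) * α) A)).card) ∧
      (Even i →
        (hsum (hs i) ((Finset.range r).biUnion fun j => transl ((j : ℤ) * α) A)).card <
        (hsum (hs i) ((Finset.range r).biUnion fun j => transl ((j : ℤ) * β) B)).card)) :=
  stmt_11_general A B hAne hBne hminA hminB m hs hmono hrace N hN α β hα hβ r hr
end
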